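/- Let Z : Fin 4 × Fin 4 → ℝ, g₀,g₁,g₂,g₃ ∈ C([0,h₂],ℝ), f₀,f₁,f₂,f₃ ∈ C([0,h₁],ℝ). Define for k = 0,1,2,3: φ_k(x₂) = Σ_{j=0}^{3} (x₂^j / j!)·Z(k,j) + ∫_0^{x₂} ((x₂−τ)³/3!)·g_k(τ) dτ and ψ_k(x₁) = Σ_{i=0}^{3} ((x₁−h₁)^i / i!)·Z(i,k) + ∫_{h₁}^{x₁} ((x₁−λ)³/3!)·f_k(λ) dλ. Then for all k, m ∈ {0,1,2,3}: φ_k^{(m)}(0) = ψ_m^{(k)}(h₁). -/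

import Mathlib

/-!
Both sides equal `Z (k, m)`. Each `φ k` (resp. `ψ m`) is a Taylor polynomial at `0` (resp. `h₁`)
plus the integral remainder `∫ c..x, (x - τ) ^ n / n! * G τ`. Differentiating under the integral
sign lowers `n` by one, and the remainder vanishes at `x = c`, so the `m`-th derivative at the base
point is the `m`-th coefficient.

The data `g k`, `f m` are only known on one side of the base point. On the other side the integral
is either a genuine one or the junk value `0`; in both cases it agrees near the base point with
the integral of a globally integrable function, which is all the differentiation needs.
-/

open intervalIntegral Set
open MeasureTheory Filter Topology Asymptotics
open scoped Interval

section TaylorRemainder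

open scoped Nat

noncomputable def taylorKernel (n : ℕ) (x τ : ℝ) : ℝ := (x - τ) ^ n / n !

variable {G : ℝ → ℝ} {n : ℕ}

@[simp]
theorem taylorKernel_zero (x τ : ℝ) : taylorKernel 0 x τ = 1 := by
  simp [taylorKernel]

theorem continuous_taylorKernel (x : ℝ) : Continuous (taylorKernel n x) := by
  unfold taylorKernel
  fun_prop

theorem taylorKernel_ne_zero {x τ : ℝ} (h : τ ≠ x) : taylorKernel n x τ ≠ 0 :=
  div_ne_zero (pow_ne_zero _ (sub_ne_zero.mpr h.symm)) (by positivity)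

theorem hasDerivAt_taylorKernel_succ (τ y : ℝ) :
    HasDerivAt (fun y => taylorKernel (n + 1) y τ) (taylorKernel n y τ) y := by
  refine ((((hasDerivAt_id y).sub_const τ).pow (n + 1)).div_const ((n + 1)! : ℝ)).congr_deriv ?_
  simp only [taylorKernel, Nat.factorial_succ, id]
  push_cast
  field_simp

theorem hasDerivAt_integral_taylorKernel_succ_mul
    (hG : ∀ a b, IntervalIntegrable G volume a b) (a b x : ℝ) :
    HasDerivAt (fun y => ∫ τ in a..b, taylorKernel (n + 1) y τ * G τ)
      (∫ τ in a..b, taylorKernel n x τ * G τ) x := by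
  have hint : ∀ y m, IntervalIntegrable (fun τ => taylorKernel m y τ * G τ) volume a b :=
    fun y m => (hG a b).continuousOn_mul (continuous_taylorKernel y).continuousOn
  refine (hasDerivAt_integral_of_dominated_loc_of_deriv_le
    (bound := fun τ => (|x - τ| + 1) ^ n / n ! * ‖G τ‖)
    (Metric.ball_mem_nhds x one_pos)
    (Eventually.of_forall fun y => (intervalIntegrable_iff.mp (hint y _)).aestronglyMeasurable)
    (hint x _) (intervalIntegrable_iff.mp (hint x _)).aestronglyMeasurable
    (Eventually.of_forall fun τ _ y hy => ?_) ((hG a b).norm.continuousOn_mul (by fun_prop))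
    (Eventually.of_forall fun τ _ y _ => (hasDerivAt_taylorKernel_succ τ y).mul_const _)).2
  have hyτ : |y - τ| ≤ |x - τ| + 1 := by
    rw [Metric.mem_ball, Real.dist_eq] at hy
    linarith [abs_sub_le y x τ]
  rw [taylorKernel, norm_mul, norm_div, Real.norm_eq_abs, Real.norm_eq_abs, abs_pow,
    Nat.abs_cast]
  gcongr

-- `G` need not be continuous at `x`: the zero of the kernel on the diagonal makes this `o(y - x)`.
theorem hasDerivAt_integral_self_taylorKernel_succ_mul
    (hG : ∀ a b, IntervalIntegrable G volume a b) (x : ℝ) :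
    HasDerivAt (fun y => ∫ τ in x..y, taylorKernel (n + 1) y τ * G τ) 0 x := by
  have hbound : ∀ y, ‖∫ τ in x..y, taylorKernel (n + 1) y τ * G τ‖
      ≤ |y - x| ^ (n + 1) * |∫ τ in x..y, ‖G τ‖| := by
    intro y
    refine (norm_integral_le_abs_of_norm_le
      ((ae_restrict_iff' measurableSet_uIoc).mpr (Eventually.of_forall fun τ hτ => ?_))
      ((hG x y).norm.const_mul (|y - x| ^ (n + 1)))).trans_eq ?_
    · have hyτ : |y - τ| ≤ |y - x| := abs_sub_right_of_mem_uIcc (uIoc_subset_uIcc hτ)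
      have hfac : (1 : ℝ) ≤ (n + 1)! := mod_cast (n + 1).factorial_pos
      rw [taylorKernel, norm_mul, norm_div, Real.norm_eq_abs, Real.norm_eq_abs, abs_pow,
        Nat.abs_cast]
      gcongr
      exact (div_le_self (by positivity) hfac).trans (by gcongr)
    · rw [intervalIntegral.integral_const_mul, abs_mul, abs_of_nonneg (by positivity)]
  have hsmall : Tendsto (fun y => (y - x) ^ n * ∫ τ in x..y, ‖G τ‖) (𝓝 x) (𝓝 0) := by
    have hcont : Continuous fun y => (y - x) ^ n * ∫ τ in x..y, ‖G τ‖ :=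
      ((continuous_sub_right x).pow n).mul (continuous_primitive (fun a b => (hG a b).norm) x)
    simpa using hcont.tendsto x
  rw [hasDerivAt_iff_isLittleO]
  simp only [integral_same, sub_zero, smul_zero]
  refine IsBigO.trans_isLittleO (IsBigO.of_bound 1 (Eventually.of_forall fun y => ?_))
    (by simpa using
      (isBigO_refl (fun y => y - x) _).mul_isLittleO ((isLittleO_one_iff ℝ).mpr hsmall))
  rw [one_mul, norm_mul, norm_mul, norm_pow, Real.norm_eq_abs, Real.norm_eq_abs,
    Real.norm_eq_abs, ← mul_assoc, ← pow_succ']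
  exact hbound y

theorem hasDerivAt_integral_upper_taylorKernel_succ_mul
    (hG : ∀ a b, IntervalIntegrable G volume a b) (c x : ℝ) :
    HasDerivAt (fun y => ∫ τ in c..y, taylorKernel (n + 1) y τ * G τ)
      (∫ τ in c..x, taylorKernel n x τ * G τ) x := by
  have hint : ∀ y a b,
      IntervalIntegrable (fun τ => taylorKernel (n + 1) y τ * G τ) volume a b :=
    fun y a b => (hG a b).continuousOn_mul (continuous_taylorKernel y).continuousOn
  have hsplit : (fun y => ∫ τ in c..y, taylorKernel (n + 1) y τ * G τ) = fun y =>
      (∫ τ in c..x, taylorKernel (n + 1) y τ * G τ)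
        + ∫ τ in x..y, taylorKernel (n + 1) y τ * G τ :=
    funext fun y => (integral_add_adjacent_intervals (hint y c x) (hint y x y)).symm
  rw [hsplit, ← add_zero (∫ τ in c..x, _)]
  exact (hasDerivAt_integral_taylorKernel_succ_mul hG c x x).add
    (hasDerivAt_integral_self_taylorKernel_succ_mul hG x)

theorem hasDerivAt_sum_taylorKernel_mul (a : Fin (n + 2) → ℝ) (c x : ℝ) :
    HasDerivAt (fun y => ∑ j : Fin (n + 2), taylorKernel j y c * a j)
      (∑ j : Fin (n + 1), taylorKernel j x c * a j.succ) x := by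
  simp_rw [Fin.sum_univ_succ (n := n + 1), Fin.val_zero, Fin.val_succ, taylorKernel_zero,
    one_mul]
  rw [← zero_add (∑ j : Fin (n + 1), _)]
  exact (hasDerivAt_const x _).add (HasDerivAt.fun_sum fun (j : Fin (n + 1)) _ =>
    (hasDerivAt_taylorKernel_succ c x).mul_const (a j.succ))

noncomputable def taylorWithIntegralRemainder (a : Fin (n + 1) → ℝ) (G : ℝ → ℝ) (c x : ℝ) : ℝ :=
  ∑ j : Fin (n + 1), taylorKernel j x c * a j + ∫ τ in c..x, taylorKernel n x τ * G τ

namespace taylorWithIntegralRemainder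

theorem apply_self (a : Fin (n + 1) → ℝ) (G : ℝ → ℝ) (c : ℝ) :
    taylorWithIntegralRemainder a G c c = a 0 := by
  simp [taylorWithIntegralRemainder, taylorKernel, Fin.sum_univ_succ]

theorem hasDerivAt (hG : ∀ a b, IntervalIntegrable G volume a b) (a : Fin (n + 2) → ℝ)
    (c x : ℝ) :
    HasDerivAt (taylorWithIntegralRemainder a G c)
      (taylorWithIntegralRemainder (Fin.tail a) G c x) x :=
  (hasDerivAt_sum_taylorKernel_mul a c x).add
    (hasDerivAt_integral_upper_taylorKernel_succ_mul hG c x)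

theorem iteratedDeriv_self (hG : ∀ a b, IntervalIntegrable G volume a b) (a : Fin (n + 1) → ℝ)
    (c : ℝ) (m : Fin (n + 1)) :
    iteratedDeriv m (taylorWithIntegralRemainder a G c) c = a m := by
  induction n with
  | zero => simp [Fin.fin_one_eq_zero m, apply_self]
  | succ n ih =>
    refine Fin.cases (by simp [apply_self]) (fun m => ?_) m
    rw [Fin.val_succ, iteratedDeriv_succ', funext fun x => (hasDerivAt hG a c x).deriv, ih]
    rfl

end taylorWithIntegralRemainder

end TaylorRemainder

section IntegrableReplacement

variable {g : ℝ → ℝ} {k : ℝ → ℝ → ℝ} {c d : ℝ}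

theorem IntervalIntegrable.of_mul_continuousOn {u : ℝ → ℝ} {a b : ℝ}
    (h : IntervalIntegrable (fun τ => u τ * g τ) volume a b) (hu : ContinuousOn u [[a, b]])
    (hu0 : ∀ τ ∈ [[a, b]], u τ ≠ 0) : IntervalIntegrable g volume a b :=
  (h.continuousOn_mul (hu.inv₀ hu0)).congr fun τ hτ =>
    inv_mul_cancel_left₀ (hu0 τ (uIoc_subset_uIcc hτ)) _

theorem exists_integrable_integral_mul_eventuallyEq_of_lt (hk : ∀ x, Continuous (k x))
    (hk0 : ∀ x τ, τ ≠ x → k x τ ≠ 0) (hcd : c < d) (hg : IntervalIntegrable g volume c d) :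
    ∃ G, Integrable G ∧
      (fun x => ∫ τ in c..x, k x τ * g τ) =ᶠ[𝓝 c] fun x => ∫ τ in c..x, k x τ * G τ := by
  by_cases hleft : ∃ b < c, IntervalIntegrable g volume b c
  · obtain ⟨b, hbc, hgb⟩ := hleft
    refine ⟨(Ioc b d).indicator g, (integrable_indicator_iff measurableSet_Ioc).mpr
      ((intervalIntegrable_iff_integrableOn_Ioc_of_le (hbc.trans hcd).le).mp (hgb.trans hg)), ?_⟩
    filter_upwards [Ioo_mem_nhds hbc hcd] with x hx
    refine integral_congr_ae (Eventually.of_forall fun τ hτ => ?_)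
    have hsub : Ι c x ⊆ Ioc b d :=
      Ioc_subset_Ioc (le_min hbc.le hx.1.le) (max_le hcd.le hx.2.le)
    rw [indicator_of_mem (hsub hτ)]
  · push Not at hleft
    refine ⟨(Ioc c d).indicator g, (integrable_indicator_iff measurableSet_Ioc).mpr
      ((intervalIntegrable_iff_integrableOn_Ioc_of_le hcd.le).mp hg), ?_⟩
    filter_upwards [Iio_mem_nhds hcd] with x hxd
    rcases le_or_gt c x with hcx | hxc
    · refine integral_congr_ae (Eventually.of_forall fun τ hτ => ?_)
      rw [uIoc_of_le hcx] at hτ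
      rw [indicator_of_mem (show τ ∈ Ioc c d from ⟨hτ.1, hτ.2.trans hxd.le⟩)]
    -- left of `c` both integrals are `0`, the one of `k x * g` as a junk value
    · have hG0 : ∫ τ in c..x, k x τ * (Ioc c d).indicator g τ = 0 := by
        refine integral_zero_ae (Eventually.of_forall fun τ hτ => ?_)
        rw [uIoc_of_ge hxc.le] at hτ
        rw [indicator_of_notMem fun h => h.1.not_ge hτ.2, mul_zero]
      rw [hG0]
      refine integral_undef fun hint => hleft ((x + c) / 2) (by linarith) ?_
      have hmid : [[(x + c) / 2, c]] ⊆ [[x, c]] := by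
        rw [uIcc_of_le (by linarith), uIcc_of_le hxc.le]
        exact Icc_subset_Icc (by linarith) le_rfl
      refine (hint.symm.mono_set hmid).of_mul_continuousOn (hk x).continuousOn
        fun τ hτ => hk0 x τ ?_
      rw [uIcc_of_le (by linarith)] at hτ
      linarith [hτ.1]

theorem integral_mul_eq_integral_neg_mul_comp_neg (k : ℝ → ℝ → ℝ) (g : ℝ → ℝ) (c x : ℝ) :
    ∫ τ in c..x, k x τ * g τ = ∫ σ in -c..-x, -k x (-σ) * g (-σ) := by
  have := integral_comp_neg (a := -c) (b := -x) fun τ => -k x τ * g τ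
  simp only [neg_neg, neg_mul, intervalIntegral.integral_neg] at this ⊢
  rw [this, integral_symm]

theorem exists_integrable_integral_mul_eventuallyEq_of_gt (hk : ∀ x, Continuous (k x))
    (hk0 : ∀ x τ, τ ≠ x → k x τ ≠ 0) (hdc : d < c) (hg : IntervalIntegrable g volume c d) :
    ∃ G, Integrable G ∧
      (fun x => ∫ τ in c..x, k x τ * g τ) =ᶠ[𝓝 c] fun x => ∫ τ in c..x, k x τ * G τ := by
  obtain ⟨G, hGint, hG⟩ := exists_integrable_integral_mul_eventuallyEq_of_lt
    (k := fun y σ => -k (-y) (-σ)) (fun y => ((hk _).comp continuous_neg).neg)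
    (fun y σ hσ => neg_ne_zero.mpr (hk0 _ _ (neg_injective.ne hσ))) (neg_lt_neg hdc)
    ((IntervalIntegrable.iff_comp_neg).mp hg)
  refine ⟨fun τ => G (-τ), hGint.comp_neg, ?_⟩
  filter_upwards [(continuous_neg.tendsto c).eventually hG] with x hx
  rw [integral_mul_eq_integral_neg_mul_comp_neg k g, integral_mul_eq_integral_neg_mul_comp_neg k]
  simpa using hx

theorem exists_integrable_integral_mul_eventuallyEq (hk : ∀ x, Continuous (k x))
    (hk0 : ∀ x τ, τ ≠ x → k x τ ≠ 0) (hcd : c ≠ d) (hg : IntervalIntegrable g volume c d) :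
    ∃ G, Integrable G ∧
      (fun x => ∫ τ in c..x, k x τ * g τ) =ᶠ[𝓝 c] fun x => ∫ τ in c..x, k x τ * G τ :=
  hcd.lt_or_gt.elim (exists_integrable_integral_mul_eventuallyEq_of_lt hk hk0 · hg)
    (exists_integrable_integral_mul_eventuallyEq_of_gt hk hk0 · hg)

theorem iteratedDeriv_eq_of_eventuallyEq_taylorWithIntegralRemainder {n : ℕ} {F : ℝ → ℝ}
    {a : Fin (n + 1) → ℝ} (hcd : c ≠ d) (hg : IntervalIntegrable g volume c d)
    (hF : F =ᶠ[𝓝 c] taylorWithIntegralRemainder a g c) (m : Fin (n + 1)) :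
    iteratedDeriv m F c = a m := by
  obtain ⟨G, hGint, hG⟩ := exists_integrable_integral_mul_eventuallyEq
    continuous_taylorKernel (fun _ _ => taylorKernel_ne_zero) hcd hg
  have hFG : F =ᶠ[𝓝 c] taylorWithIntegralRemainder a G c := by
    filter_upwards [hF, hG] with x hFx hGx
    rw [hFx, taylorWithIntegralRemainder, taylorWithIntegralRemainder, hGx]
  rw [hFG.iteratedDeriv_eq,
    taylorWithIntegralRemainder.iteratedDeriv_self (fun _ _ => hGint.intervalIntegrable)]

end IntegrableReplacement

theorem stmt_4 (h₁ h₂ : ℝ) (hh₁ : 0 < h₁) (hh₂ : 0 < h₂)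
    (Z : Fin 4 × Fin 4 → ℝ) (g f : Fin 4 → ℝ → ℝ)
    (hg : ∀ k, ContinuousOn (g k) (Icc 0 h₂))
    (hf : ∀ k, ContinuousOn (f k) (Icc 0 h₁))
    (φ ψ : Fin 4 → ℝ → ℝ)
    (hφ : ∀ k x₂, φ k x₂ = (∑ j : Fin 4, x₂ ^ (j : ℕ) / (Nat.factorial j : ℝ) * Z (k, j))
      + ∫ τ in (0:ℝ)..x₂, (x₂ - τ) ^ 3 / 6 * g k τ)
    (hψ : ∀ k x₁, ψ k x₁ = (∑ i : Fin 4, (x₁ - h₁) ^ (i : ℕ) / (Nat.factorial i : ℝ) * Z (i, k))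
      + ∫ l in h₁..x₁, (x₁ - l) ^ 3 / 6 * f k l) :
    ∀ k m : Fin 4, iteratedDeriv (m : ℕ) (φ k) 0 = iteratedDeriv (k : ℕ) (ψ m) h₁ := by
  intro k m
  have h3 : (Nat.factorial 3 : ℝ) = 6 := by norm_num [Nat.factorial]
  have hφk : iteratedDeriv m (φ k) 0 = Z (k, m) :=
    iteratedDeriv_eq_of_eventuallyEq_taylorWithIntegralRemainder (a := fun j => Z (k, j)) hh₂.ne
      ((hg k).intervalIntegrable_of_Icc hh₂.le)
      (Eventually.of_forall fun x => by simp [hφ, taylorWithIntegralRemainder, taylorKernel, h3]) m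
  have hψm : iteratedDeriv k (ψ m) h₁ = Z (k, m) :=
    iteratedDeriv_eq_of_eventuallyEq_taylorWithIntegralRemainder (a := fun i => Z (i, m)) hh₁.ne'
      ((hf m).intervalIntegrable_of_Icc hh₁.le).symm
      (Eventually.of_forall fun x => by simp [hψ, taylorWithIntegralRemainder, taylorKernel, h3]) k
  rw [hφk, hψm]
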